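/- If the toric ideal I_A is generated by its indispensable binomials, then every connected component of the indispensable complex Δ_ind(A) is a 1-simplex. -/

import Mathlib

open MvPolynomial

noncomputable section

/-- The `A`-degree of a monomial exponent vector `u`. -/
def degA {m n : ℕ} (A : Fin m → Fin n → ℤ) (u : Fin m →₀ ℕ) : Fin n → ℤ :=
  ∑ i, (u i : ℤ) • A i

/-- The affine semigroup `ℕA` is pointed. -/
def IsPointed {m n : ℕ} (A : Fin m → Fin n → ℤ) : Prop :=
  ∀ u v : Fin m →₀ ℕ, degA A u + degA A v = 0 → degA A u = 0

/-- The toric ideal `I_A`. -/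
def toricIdeal (K : Type*) [Field K] {m n : ℕ} (A : Fin m → Fin n → ℤ) :
    Ideal (MvPolynomial (Fin m) K) :=
  Ideal.span {f | ∃ u v : Fin m →₀ ℕ, degA A u = degA A v ∧
    f = monomial u (1 : K) - monomial v 1}

/-- `b` belongs to the affine semigroup `ℕA`. -/
def inNA {m n : ℕ} (A : Fin m → Fin n → ℤ) (b : Fin n → ℤ) : Prop :=
  ∃ u : Fin m →₀ ℕ, degA A u = b

/-- `c` is strictly smaller than `b` in the natural partial order on `ℕA`. -/
def ltA {m n : ℕ} (A : Fin m → Fin n → ℤ) (c b : Fin n → ℤ) : Prop :=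
  (∃ e, inNA A e ∧ b = c + e) ∧ c ≠ b

/-- The ideal `I_{A,b}` generated by binomials of `A`-degree strictly less than `b`. -/
def subIdeal (K : Type*) [Field K] {m n : ℕ} (A : Fin m → Fin n → ℤ) (b : Fin n → ℤ) :
    Ideal (MvPolynomial (Fin m) K) :=
  Ideal.span {f | ∃ u v : Fin m →₀ ℕ, degA A u = degA A v ∧ ltA A (degA A u) b ∧
    f = monomial u (1 : K) - monomial v 1}

/-- The graph `G(b)` on the fiber `deg_A^{-1}(b)`. -/
def fiberGraph (K : Type*) [Field K] {m n : ℕ} (A : Fin m → Fin n → ℤ) (b : Fin n → ℤ) :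
    SimpleGraph {u : Fin m →₀ ℕ // degA A u = b} where
  Adj x y := x ≠ y ∧ monomial x.1 (1 : K) - monomial y.1 1 ∈ subIdeal K A b
  symm := ⟨by
    rintro x y ⟨hne, hmem⟩
    exact ⟨hne.symm, by simpa [neg_sub] using neg_mem hmem⟩⟩
  loopless := ⟨fun x h => h.1 rfl⟩

/-- A set of binomials of `I_A`. -/
def IsBinomialSet (K : Type*) [Field K] {m n : ℕ} (A : Fin m → Fin n → ℤ)
    (S : Set (MvPolynomial (Fin m) K)) : Prop :=
  ∀ f ∈ S, ∃ u v : Fin m →₀ ℕ, degA A u = degA A v ∧ f = monomial u (1 : K) - monomial v 1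

/-- A minimal system of binomial generators of `I_A`. -/
def IsMinimalGenSet (K : Type*) [Field K] {m n : ℕ} (A : Fin m → Fin n → ℤ)
    (S : Set (MvPolynomial (Fin m) K)) : Prop :=
  IsBinomialSet K A S ∧ Ideal.span S = toricIdeal K A ∧
    ∀ T : Set (MvPolynomial (Fin m) K), T ⊂ S → Ideal.span T ≠ toricIdeal K A

/-- `b` is a Betti `A`-degree. -/
def IsBettiDegree (K : Type*) [Field K] {m n : ℕ} (A : Fin m → Fin n → ℤ)
    (b : Fin n → ℤ) : Prop :=
  ∃ S, IsMinimalGenSet K A S ∧ ∃ u v : Fin m →₀ ℕ, degA A u = b ∧ degA A v = b ∧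
    monomial u (1 : K) - monomial v 1 ∈ S

/-- `b` is the `A`-degree of a nonzero binomial of `I_A`. -/
def IsBinomialDegree {m n : ℕ} (A : Fin m → Fin n → ℤ) (b : Fin n → ℤ) : Prop :=
  ∃ u v : Fin m →₀ ℕ, u ≠ v ∧ degA A u = b ∧ degA A v = b

/-- `b` is a minimal binomial `A`-degree. -/
def IsMinimalBinomialDegree {m n : ℕ} (A : Fin m → Fin n → ℤ) (b : Fin n → ℤ) : Prop :=
  IsBinomialDegree A b ∧ ∀ c, IsBinomialDegree A c → ¬ ltA A c b

/-- An indispensable binomial of `I_A`: it belongs, up to sign, to every binomial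
generating set of `I_A`. -/
def IsIndispensableBinomial (K : Type*) [Field K] {m n : ℕ} (A : Fin m → Fin n → ℤ)
    (f : MvPolynomial (Fin m) K) : Prop :=
  f ∈ toricIdeal K A ∧
    ∀ S, IsBinomialSet K A S → Ideal.span S = toricIdeal K A → f ∈ S ∨ -f ∈ S

/-- The number of minimal systems of binomial generators of `I_A`, where the
sign of a binomial does not count (a system is recorded as the set of its
sign-pairs `{f, -f}`). -/
def nuIA (K : Type*) [Field K] {m n : ℕ} (A : Fin m → Fin n → ℤ) : ℕ :=
  Set.ncard {U : Set (Set (MvPolynomial (Fin m) K)) |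
    ∃ S, IsMinimalGenSet K A S ∧ U = (fun f => ({f, -f} : Set (MvPolynomial (Fin m) K))) '' S}

/-- The number of elements of `A`-degree `b` in the generating set `S`. -/
def betti0 (K : Type*) [Field K] {m n : ℕ} (A : Fin m → Fin n → ℤ)
    (S : Set (MvPolynomial (Fin m) K)) (b : Fin n → ℤ) : ℕ :=
  Set.ncard {f ∈ S | ∃ u v : Fin m →₀ ℕ, degA A u = b ∧ degA A v = b ∧
    f = monomial u (1 : K) - monomial v 1}

/-- The set of exponents of monomials of the monomial ideal `M_A`. -/
def MAset {m n : ℕ} (A : Fin m → Fin n → ℤ) : Set (Fin m →₀ ℕ) :=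
  {u | ∃ v : Fin m →₀ ℕ, v ≠ u ∧ degA A v = degA A u}

/-- The minimal monomial generating set `T_A` of `M_A` (monomials of `M_A`
minimal under divisibility). -/
def TA {m n : ℕ} (A : Fin m → Fin n → ℤ) : Set (Fin m →₀ ℕ) :=
  {u ∈ MAset A | ∀ w ∈ MAset A, (∀ i, w i ≤ u i) → w = u}

/-! If `x^u - x^v` is indispensable, the fiber of its `A`-degree is exactly `{u, v}`: for a third
exponent `w` in that fiber, `x^u - x^v = (x^u - x^w) + (x^w - x^v)`, so the binomials other than
`±(x^u - x^v)` would still generate `I_A`.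

If the indispensable binomials generate `I_A`, then for `u ∈ T_A` the binomial `x^u - x^v₀` lies
in their span, so some indispensable binomial has a monomial dividing `x^u`; by minimality of `u`
that monomial is `x^u`, hence the fiber of `u` is a pair `{u, v}`. Any `w ≤ v` in `M_A` then
forces `w = v`, since `w' + (v - w)` (for `w'` of the degree of `w`) lands in that pair. -/

lemma degA_add {m n : ℕ} (A : Fin m → Fin n → ℤ) (u v : Fin m →₀ ℕ) :
    degA A (u + v) = degA A u + degA A v := by
  simp only [degA, Finsupp.add_apply, Nat.cast_add, add_smul, Finset.sum_add_distrib]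

def binomials (K : Type*) [Field K] {m n : ℕ} (A : Fin m → Fin n → ℤ) :
    Set (MvPolynomial (Fin m) K) :=
  {f | ∃ u v : Fin m →₀ ℕ, degA A u = degA A v ∧ f = monomial u (1 : K) - monomial v 1}

lemma toricIdeal_eq_span_binomials (K : Type*) [Field K] {m n : ℕ} (A : Fin m → Fin n → ℤ) :
    toricIdeal K A = Ideal.span (binomials K A) :=
  rfl

lemma exists_le_of_mem_support_of_mem_span {σ R : Type*} [CommSemiring R]
    {S : Set (MvPolynomial σ R)} {f : MvPolynomial σ R} (hf : f ∈ Ideal.span S)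
    {u : σ →₀ ℕ} (hu : u ∈ f.support) : ∃ g ∈ S, ∃ s ∈ g.support, s ≤ u := by
  set T : Set (σ →₀ ℕ) := ⋃ g ∈ S, (g.support : Set (σ →₀ ℕ))
  have hST : Ideal.span S ≤ Ideal.span ((fun s => monomial s (1 : R)) '' T) :=
    Ideal.span_le.2 fun g hg =>
      mem_ideal_span_monomial_image.2 fun s hs => ⟨s, Set.mem_biUnion hg hs, le_rfl⟩
  obtain ⟨s, hsT, hsu⟩ := mem_ideal_span_monomial_image.1 (hST hf) u hu
  obtain ⟨g, hg, hs⟩ := Set.mem_iUnion₂.1 hsT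
  exact ⟨g, hg, s, hs, hsu⟩

section Indispensable

variable {K : Type*} [Field K] {m n : ℕ} {A : Fin m → Fin n → ℤ}

lemma neg_mem_binomials {f : MvPolynomial (Fin m) K} (hf : f ∈ binomials K A) :
    -f ∈ binomials K A := by
  obtain ⟨u, v, huv, rfl⟩ := hf
  exact ⟨v, u, huv.symm, neg_sub _ _⟩

namespace IsIndispensableBinomial

variable {f : MvPolynomial (Fin m) K}

lemma neg (h : IsIndispensableBinomial K A f) : IsIndispensableBinomial K A (-f) :=
  ⟨neg_mem h.1, fun S hS hspan => (h.2 S hS hspan).symm.imp_right fun hf => by rwa [neg_neg]⟩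

lemma exists_eq_monomial_sub_monomial (h : IsIndispensableBinomial K A f) :
    ∃ a a' : Fin m →₀ ℕ, a ≠ a' ∧ degA A a = degA A a' ∧
      f = monomial a (1 : K) - monomial a' 1 := by
  have hspan : Ideal.span (binomials K A \ {0}) = toricIdeal K A :=
    Ideal.span_sdiff_singleton_zero
  have hf : f ∈ binomials K A ∧ f ≠ 0 := by
    rcases h.2 _ (fun g hg => hg.1) hspan with hf | ⟨hf, hf0⟩
    · exact hf
    · exact ⟨by simpa using neg_mem_binomials hf, fun h0 => hf0 (by simp [h0])⟩
  obtain ⟨⟨a, a', hdeg, rfl⟩, hne⟩ := hf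
  exact ⟨a, a', fun h => hne (by rw [h, sub_self]), hdeg, rfl⟩

lemma exists_of_mem_support (h : IsIndispensableBinomial K A f) {s : Fin m →₀ ℕ}
    (hs : s ∈ f.support) : ∃ v, v ≠ s ∧ degA A v = degA A s ∧
      IsIndispensableBinomial K A (monomial s (1 : K) - monomial v 1) := by
  classical
  obtain ⟨a, a', hne, hdeg, rfl⟩ := h.exists_eq_monomial_sub_monomial
  have hs' : s = a ∨ s = a' := by simpa [support_monomial] using support_sub (Fin m) _ _ hs
  rcases hs' with rfl | rfl
  · exact ⟨a', hne.symm, hdeg.symm, h⟩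
  · exact ⟨a, hne, hdeg, by simpa only [neg_sub] using h.neg⟩

lemma notMem_span_binomials_sdiff (h : IsIndispensableBinomial K A f) :
    f ∉ Ideal.span (binomials K A \ {f, -f}) := by
  intro hf
  have hspan : Ideal.span (binomials K A \ {f, -f}) = toricIdeal K A := by
    rw [toricIdeal_eq_span_binomials]
    refine le_antisymm (Ideal.span_mono Set.sdiff_subset) (Ideal.span_le.2 fun g hg => ?_)
    by_cases hg' : g ∈ ({f, -f} : Set _)
    · rcases hg' with rfl | rfl
      · exact hf
      · exact neg_mem hf
    · exact Ideal.subset_span ⟨hg, hg'⟩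
  rcases h.2 _ (fun g hg => hg.1) hspan with hS | hS <;> exact hS.2 (by simp)

lemma eq_or_eq_of_degA_eq {u v : Fin m →₀ ℕ}
    (h : IsIndispensableBinomial K A (monomial u (1 : K) - monomial v 1))
    (hdeg : degA A u = degA A v) {w : Fin m →₀ ℕ} (hw : degA A w = degA A u) :
    w = u ∨ w = v := by
  by_contra! hwuv
  obtain ⟨hwu, hwv⟩ := hwuv
  refine h.notMem_span_binomials_sdiff ?_
  set f : MvPolynomial (Fin m) K := monomial u 1 - monomial v 1
  -- the two halves of `f` have a nonzero coefficient at `w`, while `±f` do not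
  have hf : ∀ g ∈ ({f, -f} : Set _), coeff w g = 0 := by
    rintro g (rfl | rfl) <;> simp [f, coeff_monomial, hwu.symm, hwv.symm]
  have h₁ : monomial u 1 - monomial w 1 ∈ binomials K A \ {f, -f} :=
    ⟨⟨u, w, hw.symm, rfl⟩, fun hg => by simpa [coeff_monomial, hwu.symm] using hf _ hg⟩
  have h₂ : monomial w 1 - monomial v 1 ∈ binomials K A \ {f, -f} :=
    ⟨⟨w, v, hw.trans hdeg, rfl⟩, fun hg => by simpa [coeff_monomial, hwv.symm] using hf _ hg⟩
  simpa only [sub_add_sub_cancel] using add_mem (Ideal.subset_span h₁) (Ideal.subset_span h₂)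

end IsIndispensableBinomial

lemma exists_isIndispensableBinomial_of_mem_TA
    (hgen : Ideal.span {f | IsIndispensableBinomial K A f} = toricIdeal K A)
    {u : Fin m →₀ ℕ} (hu : u ∈ TA A) : ∃ v, v ≠ u ∧ degA A v = degA A u ∧
      IsIndispensableBinomial K A (monomial u (1 : K) - monomial v 1) := by
  obtain ⟨⟨v₀, hv₀u, hv₀⟩, hmin⟩ := hu
  have hmem : monomial u (1 : K) - monomial v₀ 1 ∈
      Ideal.span {f | IsIndispensableBinomial K A f} :=
    hgen ▸ Ideal.subset_span ⟨u, v₀, hv₀.symm, rfl⟩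
  have hsupp : u ∈ (monomial u (1 : K) - monomial v₀ 1).support := by
    simp [mem_support_iff, coeff_monomial, hv₀u]
  obtain ⟨g, hg, s, hs, hsu⟩ := exists_le_of_mem_support_of_mem_span hmem hsupp
  obtain ⟨v, hvs, hdeg, hind⟩ := hg.exists_of_mem_support hs
  obtain rfl : s = u := hmin s ⟨v, hvs, hdeg⟩ (Finsupp.le_def.1 hsu)
  exact ⟨v, hvs, hdeg, hind⟩

end Indispensable

lemma mem_TA_of_degA_fiber_eq_pair {m n : ℕ} {A : Fin m → Fin n → ℤ} {u v : Fin m →₀ ℕ}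
    (hu : u ∈ TA A) (hvu : v ≠ u) (hdeg : degA A v = degA A u)
    (hfib : ∀ w, degA A w = degA A u → w = u ∨ w = v) : v ∈ TA A := by
  refine ⟨⟨u, hvu.symm, hdeg.symm⟩, fun w ⟨w', hw'w, hdeg'⟩ hwv => ?_⟩
  replace hwv : w ≤ v := Finsupp.le_def.2 hwv
  have hshift : degA A (w' + (v - w)) = degA A u := by
    rw [degA_add, hdeg', ← degA_add, add_tsub_cancel_of_le hwv, hdeg]
  rcases hfib _ hshift with h | h
  · have hw'u : w' = u :=
      hu.2 w' ⟨w, hw'w.symm, hdeg'.symm⟩ (Finsupp.le_def.1 (h ▸ le_self_add))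
    rw [hw'u, add_eq_left, tsub_eq_zero_iff_le] at h
    exact le_antisymm hwv h
  · exact absurd (add_right_cancel (h.trans (add_tsub_cancel_of_le hwv).symm)) hw'w

theorem statement18_general {K : Type*} [Field K] {m n : ℕ} (A : Fin m → Fin n → ℤ)
    (hgen : Ideal.span {f | IsIndispensableBinomial K A f} = toricIdeal K A) :
    ∀ u ∈ TA A, ∃ v ∈ TA A, v ≠ u ∧ degA A v = degA A u ∧
      ∀ w ∈ TA A, degA A w = degA A u → w = u ∨ w = v := by
  intro u hu
  obtain ⟨v, hvu, hdeg, hind⟩ := exists_isIndispensableBinomial_of_mem_TA hgen hu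
  have hfib : ∀ w, degA A w = degA A u → w = u ∨ w = v := fun _ hw =>
    hind.eq_or_eq_of_degA_eq hdeg.symm hw
  exact ⟨v, mem_TA_of_degA_fiber_eq_pair hu hvu hdeg hfib, hvu, hdeg, fun w _ hw => hfib w hw⟩

/-- If `I_A` is generated by its indispensable binomials, then every connected
component of the indispensable complex (i.e. every `A`-degree class of `T_A`) is
a 1-simplex: it has exactly two vertices. -/
theorem statement18 {K : Type*} [Field K] {m n : ℕ} (A : Fin m → Fin n → ℤ)
    (hA : IsPointed A)
    (hgen : Ideal.span {f | IsIndispensableBinomial K A f} = toricIdeal K A) :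
    ∀ u ∈ TA A, ∃ v ∈ TA A, v ≠ u ∧ degA A v = degA A u ∧
      ∀ w ∈ TA A, degA A w = degA A u → w = u ∨ w = v :=
  statement18_general A hgen
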